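/- Let p be an odd prime, let i1, i2 ∈ {1,…,p−1} with i1 ≠ i2, and let n1, n2 ∈ {1,…,p−2} with n1 + n2 < p. Then Δ^{i1,i2}(n1,n2,p) ≡ −Δ^{i1,i2}(n1−1,n2,p) − Δ^{i1,i2}(n1,n2−1,p) (mod p); moreover, if p does not divide n1·i1 + n2·i2, then Δ^{i1,i2}(n1,n2,p) = −Δ^{i1,i2}(n1−1,n2,p) − Δ^{i1,i2}(n1,n2−1,p) as integers. -/

import Mathlib

open Finset

/-- `Acount p i1 i2 n1 n2 i` is the number of pairs `(X1, X2)` of disjoint subsets of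
the nonzero residues mod `p` with `|X1| = n1`, `|X2| = n2` and
`i1·ΣX1 + i2·ΣX2 = i` in `ℤ/p`. -/
def Acount (p : ℕ) [NeZero p] (i1 i2 n1 n2 : ℕ) (i : ZMod p) : ℕ :=
  (((((Finset.univ.erase (0 : ZMod p)).powersetCard n1) ×ˢ
      ((Finset.univ.erase (0 : ZMod p)).powersetCard n2)).filter
    (fun X => X.1 ∩ X.2 = ∅ ∧
      (i1 : ZMod p) * X.1.sum id + (i2 : ZMod p) * X.2.sum id = i))).card

/-- `Δ^{i1,i2}(n1,n2,p) = A_0^{i1,i2}(n1,n2,p) - A_1^{i1,i2}(n1,n2,p)`. -/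
def Delta (p : ℕ) [NeZero p] (i1 i2 n1 n2 : ℕ) : ℤ :=
  (Acount p i1 i2 n1 n2 0 : ℤ) - (Acount p i1 i2 n1 n2 1 : ℤ)

/-!
Let `B(v)` count the pairs of disjoint subsets of all of `ℤ/p`, zero now allowed, with sizes
`n1, n2` and weight `i1·ΣX1 + i2·ΣX2 = v`. Sorting them by whether `0` lies in `X1`, in `X2` or
in neither gives `Δ(n1,n2) + Δ(n1-1,n2) + Δ(n1,n2-1) = B(0) - B(1)`. An affine permutation
`x ↦ u x + c` of `ℤ/p` preserves disjointness and sizes and sends weight `v` to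
`u v + (n1 i1 + n2 i2) c`. Scalings make `B` constant on `v ≠ 0`, so
`B(0) + (p-1) B(1) = C(p,n1) C(p-n1,n2) ≡ 0 (mod p)`, whence `B(0) ≡ B(1)`; when
`n1 i1 + n2 i2 ≢ 0`, a translation carries weight `0` to weight `1`, so `B(0) = B(1)`.
-/

section DisjointPairs

variable {α : Type*} [DecidableEq α]

def disjointPairs (s : Finset α) (n₁ n₂ : ℕ) : Finset (Finset α × Finset α) :=
  (s.powersetCard n₁ ×ˢ s.powersetCard n₂).filter fun X => Disjoint X.1 X.2

variable {s : Finset α} {n₁ n₂ : ℕ}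

@[simp]
lemma mem_disjointPairs {X : Finset α × Finset α} :
    X ∈ disjointPairs s n₁ n₂ ↔
      (X.1 ⊆ s ∧ #X.1 = n₁) ∧ (X.2 ⊆ s ∧ #X.2 = n₂) ∧ Disjoint X.1 X.2 := by
  simp [disjointPairs, and_assoc]

lemma card_disjointPairs (s : Finset α) (n₁ n₂ : ℕ) :
    #(disjointPairs s n₁ n₂) = (#s).choose n₁ * (#s - n₁).choose n₂ := by
  have hfiber : ∀ A ∈ s.powersetCard n₁,
      #((disjointPairs s n₁ n₂).filter (·.1 = A)) = (#s - n₁).choose n₂ := by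
    intro A hA
    rw [mem_powersetCard] at hA
    have : (disjointPairs s n₁ n₂).filter (·.1 = A) =
        ((s \ A).powersetCard n₂).map ⟨Prod.mk A, Prod.mk_right_injective A⟩ := by
      ext ⟨A', B⟩
      simp only [mem_filter, mem_disjointPairs, mem_map, mem_powersetCard, subset_sdiff,
        Function.Embedding.coeFn_mk, Prod.mk.injEq]
      constructor
      · rintro ⟨⟨-, hB, hAB⟩, rfl⟩
        exact ⟨B, ⟨⟨hB.1, hAB.symm⟩, hB.2⟩, rfl, rfl⟩
      · rintro ⟨B, ⟨⟨hBs, hBA⟩, hB⟩, rfl, rfl⟩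
        exact ⟨⟨hA, ⟨hBs, hB⟩, hBA.symm⟩, rfl⟩
    rw [this, card_map, card_powersetCard, card_sdiff_of_subset hA.1, hA.2]
  rw [card_eq_sum_card_fiberwise (f := Prod.fst) (t := s.powersetCard n₁)
      fun X hX => mem_powersetCard.2 (mem_disjointPairs.1 hX).1,
    sum_congr rfl hfiber, sum_const, card_powersetCard, smul_eq_mul]

variable {x : α}

lemma filter_mem_fst_disjointPairs_insert (hx : x ∉ s) :
    (disjointPairs (insert x s) (n₁ + 1) n₂).filter (x ∈ ·.1) =
      (disjointPairs s n₁ n₂).image fun X => (insert x X.1, X.2) := by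
  ext ⟨A, B⟩
  simp only [mem_filter, mem_disjointPairs, mem_image, Prod.exists, Prod.mk.injEq]
  constructor
  · rintro ⟨⟨⟨hA, hAc⟩, ⟨hB, hBc⟩, hAB⟩, hxA⟩
    have hxB : x ∉ B := disjoint_left.1 hAB hxA
    refine ⟨A.erase x, B, ⟨⟨subset_insert_iff.1 hA, ?_⟩,
      ⟨(subset_insert_iff_of_notMem hxB).1 hB, hBc⟩, disjoint_of_subset_left (erase_subset _ _) hAB⟩,
      insert_erase hxA, rfl⟩
    rw [card_erase_of_mem hxA, hAc, Nat.add_sub_cancel]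
  · rintro ⟨A, B, ⟨⟨hA, rfl⟩, ⟨hB, rfl⟩, hAB⟩, rfl, rfl⟩
    have hxA : x ∉ A := fun h => hx (hA h)
    exact ⟨⟨⟨insert_subset_insert x hA, card_insert_of_notMem hxA⟩,
      ⟨hB.trans (subset_insert x s), rfl⟩, disjoint_insert_left.2 ⟨fun h => hx (hB h), hAB⟩⟩,
      mem_insert_self x A⟩

lemma image_swap_disjointPairs (s : Finset α) (n₁ n₂ : ℕ) :
    (disjointPairs s n₁ n₂).image Prod.swap = disjointPairs s n₂ n₁ := by
  ext ⟨A, B⟩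
  simp only [mem_image, mem_disjointPairs, Prod.exists, Prod.swap_prod_mk, Prod.mk.injEq]
  constructor
  · rintro ⟨B, A, ⟨hB, hA, hBA⟩, rfl, rfl⟩
    exact ⟨hA, hB, hBA.symm⟩
  · rintro ⟨hA, hB, hAB⟩
    exact ⟨B, A, ⟨hB, hA, hAB.symm⟩, rfl, rfl⟩

lemma filter_mem_snd_disjointPairs_insert (hx : x ∉ s) :
    (disjointPairs (insert x s) n₁ (n₂ + 1)).filter (x ∈ ·.2) =
      (disjointPairs s n₁ n₂).image fun X => (X.1, insert x X.2) := by
  rw [← image_swap_disjointPairs, filter_image]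
  simp only [Prod.snd_swap]
  rw [filter_mem_fst_disjointPairs_insert hx, image_image,
    ← image_swap_disjointPairs s n₂, image_image]
  rfl

lemma filter_notMem_disjointPairs_insert (hx : x ∉ s) :
    (disjointPairs (insert x s) n₁ n₂).filter (fun X => x ∉ X.1 ∧ x ∉ X.2) =
      disjointPairs s n₁ n₂ := by
  ext ⟨A, B⟩
  simp only [mem_filter, mem_disjointPairs]
  constructor
  · rintro ⟨⟨⟨hA, hAc⟩, ⟨hB, hBc⟩, hAB⟩, hxA, hxB⟩
    exact ⟨⟨(subset_insert_iff_of_notMem hxA).1 hA, hAc⟩,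
      ⟨(subset_insert_iff_of_notMem hxB).1 hB, hBc⟩, hAB⟩
  · rintro ⟨⟨hA, hAc⟩, ⟨hB, hBc⟩, hAB⟩
    exact ⟨⟨⟨hA.trans (subset_insert x s), hAc⟩, ⟨hB.trans (subset_insert x s), hBc⟩, hAB⟩,
      fun h => hx (hA h), fun h => hx (hB h)⟩

lemma card_filter_disjointPairs_insert (hx : x ∉ s) (P : Finset α × Finset α → Prop)
    [DecidablePred P] (hP₁ : ∀ X, P (insert x X.1, X.2) ↔ P X)
    (hP₂ : ∀ X, P (X.1, insert x X.2) ↔ P X) :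
    #((disjointPairs (insert x s) (n₁ + 1) (n₂ + 1)).filter P) =
      #((disjointPairs s (n₁ + 1) (n₂ + 1)).filter P) + #((disjointPairs s n₁ (n₂ + 1)).filter P) +
        #((disjointPairs s (n₁ + 1) n₂).filter P) := by
  set T := disjointPairs (insert x s) (n₁ + 1) (n₂ + 1)
  have hx_notMem {m₁ m₂ : ℕ} (X) (hX : X ∈ disjointPairs s m₁ m₂) : x ∉ X.1 ∧ x ∉ X.2 :=
    have hX := mem_disjointPairs.1 hX
    ⟨fun h => hx (hX.1.1 h), fun h => hx (hX.2.1.1 h)⟩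
  have hfst : #((T.filter P).filter (x ∈ ·.1)) = #((disjointPairs s n₁ (n₂ + 1)).filter P) := by
    rw [filter_comm, filter_mem_fst_disjointPairs_insert hx, filter_image,
      card_image_of_injOn, filter_congr fun X _ => hP₁ X]
    exact (insert_erase_invOn.2.injOn.prodMap (Set.injOn_id Set.univ)).mono
      fun X hX => Set.mem_prod.2 ⟨(hx_notMem X (mem_filter.1 hX).1).1, Set.mem_univ _⟩
  have hsnd : #(((T.filter P).filter (x ∉ ·.1)).filter (x ∈ ·.2)) =
      #((disjointPairs s (n₁ + 1) n₂).filter P) := by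
    have : ((T.filter P).filter (x ∉ ·.1)).filter (x ∈ ·.2) = (T.filter (x ∈ ·.2)).filter P := by
      rw [filter_filter, filter_filter, filter_filter]
      refine filter_congr fun X hX => ⟨fun h => ⟨h.2.2, h.1⟩, fun h => ⟨h.2, ?_, h.1⟩⟩
      exact disjoint_right.1 (mem_disjointPairs.1 hX).2.2 h.1
    rw [this, filter_mem_snd_disjointPairs_insert hx, filter_image,
      card_image_of_injOn, filter_congr fun X _ => hP₂ X]
    exact ((Set.injOn_id Set.univ).prodMap insert_erase_invOn.2.injOn).mono
      fun X hX => Set.mem_prod.2 ⟨Set.mem_univ _, (hx_notMem X (mem_filter.1 hX).1).2⟩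
  have hnone : ((T.filter P).filter (x ∉ ·.1)).filter (x ∉ ·.2) =
      (disjointPairs s (n₁ + 1) (n₂ + 1)).filter P := by
    rw [← filter_notMem_disjointPairs_insert hx, filter_filter, filter_filter, filter_filter]
    exact filter_congr fun _ _ => and_comm
  rw [← card_filter_add_card_filter_not (s := T.filter P) (x ∈ ·.1),
    ← card_filter_add_card_filter_not (s := (T.filter P).filter (x ∉ ·.1)) (x ∈ ·.2),
    hfst, hsnd, hnone]
  ring

end DisjointPairs

section PairCount

variable {R : Type*} [Semiring R] [DecidableEq R]

def pairCount (s : Finset R) (a b : R) (n₁ n₂ : ℕ) (v : R) : ℕ :=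
  #((disjointPairs s n₁ n₂).filter fun X => a * X.1.sum id + b * X.2.sum id = v)

lemma pairCount_insert_zero {s : Finset R} (hs : (0 : R) ∉ s) (a b : R) (n₁ n₂ : ℕ) (v : R) :
    pairCount (insert 0 s) a b (n₁ + 1) (n₂ + 1) v =
      pairCount s a b (n₁ + 1) (n₂ + 1) v + pairCount s a b n₁ (n₂ + 1) v +
        pairCount s a b (n₁ + 1) n₂ v :=
  card_filter_disjointPairs_insert hs _ (fun _ => by dsimp only; rw [sum_insert_zero (id_eq 0)])
    (fun _ => by dsimp only; rw [sum_insert_zero (id_eq 0)])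

lemma sum_pairCount [Fintype R] (s : Finset R) (a b : R) (n₁ n₂ : ℕ) :
    ∑ v, pairCount s a b n₁ n₂ v = #(disjointPairs s n₁ n₂) :=
  (card_eq_sum_card_fiberwise fun _ _ => mem_univ _).symm

end PairCount

section Affine

variable {R : Type*} [CommRing R] [Fintype R] [DecidableEq R]

lemma pairCount_univ_le_affine (a b : R) (n₁ n₂ : ℕ) (u : Rˣ) (c v : R) :
    pairCount univ a b n₁ n₂ v ≤ pairCount univ a b n₁ n₂ (u * v + (n₁ * a + n₂ * b) * c) := by
  let e : R ≃ R := (u.mulLeft).trans (Equiv.addRight c)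
  have hsum (A : Finset R) : (A.map e.toEmbedding).sum id = u * A.sum id + #A * c := by
    simp [e, sum_map, sum_add_distrib, mul_sum]
  refine card_le_card_of_injOn (fun X => (X.1.map e.toEmbedding, X.2.map e.toEmbedding)) ?_ ?_
  · rintro ⟨A, B⟩ hX
    simp only [mem_coe, mem_filter, mem_disjointPairs, subset_univ, true_and] at hX ⊢
    obtain ⟨⟨rfl, rfl, hAB⟩, rfl⟩ := hX
    refine ⟨⟨card_map _, card_map _, disjoint_map _ |>.2 hAB⟩, ?_⟩
    rw [hsum, hsum]
    ring
  · rintro ⟨A, B⟩ - ⟨A', B'⟩ - h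
    simpa [map_inj] using h

lemma pairCount_univ_affine (a b : R) (n₁ n₂ : ℕ) (u : Rˣ) (c v : R) :
    pairCount univ a b n₁ n₂ v = pairCount univ a b n₁ n₂ (u * v + (n₁ * a + n₂ * b) * c) := by
  refine le_antisymm (pairCount_univ_le_affine a b n₁ n₂ u c v) ?_
  have h := pairCount_univ_le_affine a b n₁ n₂ u⁻¹ (-(u⁻¹ * c)) (u * v + (n₁ * a + n₂ * b) * c)
  have hv : (u⁻¹ : Rˣ) * (u * v + (n₁ * a + n₂ * b) * c) + (n₁ * a + n₂ * b) * -(u⁻¹ * c) = v := by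
    rw [mul_add, Units.inv_mul_cancel_left]
    ring
  rwa [hv] at h

end Affine

section Field

variable {F : Type*} [Field F] [Fintype F] [DecidableEq F]

lemma pairCount_univ_eq_pairCount_one (a b : F) (n₁ n₂ : ℕ) {v : F} (hv : v ≠ 0) :
    pairCount univ a b n₁ n₂ v = pairCount univ a b n₁ n₂ 1 := by
  simpa using (pairCount_univ_affine a b n₁ n₂ (Units.mk0 v hv) 0 1).symm

lemma pairCount_univ_zero_add_mul_one (a b : F) (n₁ n₂ : ℕ) :
    pairCount univ a b n₁ n₂ 0 + (Fintype.card F - 1) * pairCount univ a b n₁ n₂ 1 =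
      #(disjointPairs (univ : Finset F) n₁ n₂) := by
  rw [← sum_pairCount, ← add_sum_erase _ _ (mem_univ 0),
    sum_congr rfl fun v hv => pairCount_univ_eq_pairCount_one a b n₁ n₂ (ne_of_mem_erase hv),
    sum_const, card_erase_of_mem (mem_univ _), card_univ, smul_eq_mul]

end Field

lemma pairCount_zmod_zero_modEq_one {p : ℕ} [Fact p.Prime] (a b : ZMod p) {n₁ : ℕ} (h₀ : n₁ ≠ 0)
    (hp : n₁ < p) (n₂ : ℕ) :
    (pairCount univ a b n₁ n₂ 0 : ℤ) ≡ pairCount univ a b n₁ n₂ 1 [ZMOD p] := by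
  have hdvd : p ∣ #(disjointPairs (univ : Finset (ZMod p)) n₁ n₂) := by
    rw [card_disjointPairs, card_univ, ZMod.card]
    exact dvd_mul_of_dvd_left ((Fact.out : p.Prime).dvd_choose_self h₀ hp) _
  have h := congrArg (Nat.cast : ℕ → ZMod p) (pairCount_univ_zero_add_mul_one a b n₁ n₂)
  rw [ZMod.card, (ZMod.natCast_eq_zero_iff _ p).2 hdvd] at h
  push_cast [Nat.cast_sub (Fact.out : p.Prime).one_le, ZMod.natCast_self] at h
  rw [← ZMod.intCast_eq_intCast_iff]
  push_cast
  linear_combination h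

lemma Acount_eq_pairCount (p : ℕ) [NeZero p] (i1 i2 n1 n2 : ℕ) (v : ZMod p) :
    Acount p i1 i2 n1 n2 v = pairCount (univ.erase 0) (i1 : ZMod p) i2 n1 n2 v := by
  unfold Acount pairCount disjointPairs
  rw [filter_filter]
  congr 1
  ext X
  simp [disjoint_iff_inter_eq_empty]

lemma Delta_add_Delta_add_Delta (p : ℕ) [NeZero p] (i1 i2 n1 n2 : ℕ) :
    Delta p i1 i2 (n1 + 1) (n2 + 1) + Delta p i1 i2 n1 (n2 + 1) + Delta p i1 i2 (n1 + 1) n2 =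
      (pairCount univ (i1 : ZMod p) i2 (n1 + 1) (n2 + 1) 0 : ℤ) -
        pairCount univ (i1 : ZMod p) i2 (n1 + 1) (n2 + 1) 1 := by
  have h (v) := pairCount_insert_zero (notMem_erase 0 univ) (i1 : ZMod p) i2 n1 n2 v
  rw [insert_erase (mem_univ _)] at h
  simp only [Delta, Acount_eq_pairCount, h]
  push_cast
  ring

theorem rarefaction_stmt12_general (p : ℕ) [NeZero p] (hp : p.Prime)
    (i1 i2 : ℕ)
    (n1 n2 : ℕ) (hn1 : 1 ≤ n1 ∧ n1 ≤ p - 2) (hn2 : 1 ≤ n2 ∧ n2 ≤ p - 2) :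
    (Delta p i1 i2 n1 n2 ≡
      -Delta p i1 i2 (n1 - 1) n2 - Delta p i1 i2 n1 (n2 - 1) [ZMOD (p : ℤ)]) ∧
    (¬ (p ∣ n1 * i1 + n2 * i2) →
      Delta p i1 i2 n1 n2 =
        -Delta p i1 i2 (n1 - 1) n2 - Delta p i1 i2 n1 (n2 - 1)) := by
  have := Fact.mk hp
  obtain ⟨m1, rfl⟩ := Nat.exists_eq_add_of_le' hn1.1
  obtain ⟨m2, rfl⟩ := Nat.exists_eq_add_of_le' hn2.1
  have hΔ := Delta_add_Delta_add_Delta p i1 i2 m1 m2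
  simp only [Nat.add_sub_cancel]
  refine ⟨?_, fun hndvd => ?_⟩
  · have h := pairCount_zmod_zero_modEq_one (i1 : ZMod p) i2 m1.succ_ne_zero (by omega) (m2 + 1)
    rw [Int.modEq_iff_dvd] at h ⊢
    convert h using 1
    linarith
  · set w : ZMod p := ((m1 + 1 : ℕ) : ZMod p) * i1 + ((m2 + 1 : ℕ) : ZMod p) * i2 with hw_def
    have hw : w ≠ 0 := by
      rwa [hw_def, ← Nat.cast_mul, ← Nat.cast_mul, ← Nat.cast_add, Ne, ZMod.natCast_eq_zero_iff]
    have h := pairCount_univ_affine (i1 : ZMod p) i2 (m1 + 1) (m2 + 1) 1 w⁻¹ 0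
    rw [Units.val_one, one_mul, zero_add, mul_inv_cancel₀ hw] at h
    rw [h] at hΔ
    linarith

/-- "uncolored" Pascal's equation. -/
theorem rarefaction_stmt12 (p : ℕ) [NeZero p] (hp : p.Prime) (hodd : Odd p)
    (i1 i2 : ℕ) (hi1 : 1 ≤ i1 ∧ i1 ≤ p - 1) (hi2 : 1 ≤ i2 ∧ i2 ≤ p - 1) (hne : i1 ≠ i2)
    (n1 n2 : ℕ) (hn1 : 1 ≤ n1 ∧ n1 ≤ p - 2) (hn2 : 1 ≤ n2 ∧ n2 ≤ p - 2)
    (hsum : n1 + n2 < p) :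
    (Delta p i1 i2 n1 n2 ≡
      -Delta p i1 i2 (n1 - 1) n2 - Delta p i1 i2 n1 (n2 - 1) [ZMOD (p : ℤ)]) ∧
    (¬ (p ∣ n1 * i1 + n2 * i2) →
      Delta p i1 i2 n1 n2 =
        -Delta p i1 i2 (n1 - 1) n2 - Delta p i1 i2 n1 (n2 - 1)) :=
  rarefaction_stmt12_general p hp i1 i2 n1 n2 hn1 hn2
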